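/- arXiv:1608.07600 — 2 statements merged into one kernel-verified Lean document; each statement's English description precedes it below -/
import Mathlib

section
/- Let (R, m) be a Noetherian local ring of characteristic p > 0 with a test element c, I an ideal, and x ∈ R. Suppose that for every power q = p^e there exists an ideal I_q with I^{[q]} ⊆ I_q ⊆ (I^{[q]})* such that x is a nonzerodivisor modulo I_q. Then x is a nonzerodivisor modulo (I^{[q]})* for every q. -/
open Filter IsLocalRing

noncomputable section

variable {R : Type*} [CommRing R]

/-- The `q`-th Frobenius power `I^{[q]}` of an ideal `I`. -/
def fpow (I : Ideal R) (q : ℕ) : Ideal R := Ideal.span ((fun x => x ^ q) '' (I : Set R))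

/-- The length of `R ⧸ I` as an `R`-module, as a natural number. -/
def qlen (I : Ideal R) : ℕ := (WithBot.unbotD 0 (Order.krullDim (Submodule R (R ⧸ I)))).toNat

/-- The length of `R ⧸ I` as an `R`-module, in `ℕ∞`. -/
def lenE (I : Ideal R) : ℕ∞ := WithBot.unbotD 0 (Order.krullDim (Submodule R (R ⧸ I)))

/-- The tight closure `I*` of an ideal `I` in a ring of characteristic `p`. -/
def tightClosure (p : ℕ) (I : Ideal R) : Ideal R :=
  Ideal.span {x | ∃ c : R, (∀ P ∈ minimalPrimes R, c ∉ P) ∧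
    ∃ e₀ : ℕ, ∀ e ≥ e₀, c * x ^ p ^ e ∈ fpow I (p ^ e)}

/-- `c` is a test element: `c` avoids all minimal primes and for every ideal `I`,
`x ∈ I*` iff `c x^q ∈ I^{[q]}` for all `q = p^e`. -/
def IsTestElement (p : ℕ) (c : R) : Prop :=
  (∀ P ∈ minimalPrimes R, c ∉ P) ∧
    ∀ (I : Ideal R) (x : R), x ∈ tightClosure p I ↔ ∀ e : ℕ, c * x ^ p ^ e ∈ fpow I (p ^ e)

end

/-!
If `x a ∈ (I^{[q]})*`, then for every `q' = p^f` the test element gives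
`x^{q'} (c a^{q'}) ∈ I^{[qq']} ⊆ I_{qq'}`. Since `x`, hence `x^{q'}`, is a nonzerodivisor modulo
`I_{qq'}`, we get `c a^{q'} ∈ I_{qq'} ⊆ (I^{[qq']})*`, and the test element once more gives
`c² a^{q'} ∈ I^{[qq']} = (I^{[q]})^{[q']}`. As `c²` avoids the minimal primes, `a ∈ (I^{[q]})*`.
-/

section FrobeniusPower

variable {R : Type*} [CommRing R]

theorem fpow_one (J : Ideal R) : fpow J 1 = J := by
  simp only [fpow, pow_one, Set.image_id', Ideal.span_eq]

variable (p : ℕ) [ExpChar R p]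

theorem fpow_eq_map (I : Ideal R) (e : ℕ) :
    fpow I (p ^ e) = I.map (iterateFrobenius R p e) :=
  rfl

theorem fpow_fpow (I : Ideal R) (e f : ℕ) :
    fpow (fpow I (p ^ e)) (p ^ f) = fpow I (p ^ (e + f)) := by
  rw [fpow_eq_map, fpow_eq_map, fpow_eq_map, Ideal.map_map, add_comm e f, iterateFrobenius_add]

end FrobeniusPower

section TightClosure

variable {R : Type*} [CommRing R] {p : ℕ}

theorem mem_tightClosure_of_forall_mul_pow_mem {J : Ideal R} {y d : R}
    (hd : ∀ P ∈ minimalPrimes R, d ∉ P) (hy : ∀ e : ℕ, d * y ^ p ^ e ∈ fpow J (p ^ e)) :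
    y ∈ tightClosure p J :=
  Ideal.subset_span ⟨d, hd, 0, fun e _ => hy e⟩

theorem IsTestElement.pow {c : R} (hc : IsTestElement p c) (n : ℕ) :
    ∀ P ∈ minimalPrimes R, c ^ n ∉ P :=
  fun P hP hcn => hc.1 P hP (hP.1.1.mem_of_pow_mem n hcn)

theorem IsTestElement.mul_mem {c : R} (hc : IsTestElement p c) {J : Ideal R} {y : R}
    (hy : y ∈ tightClosure p J) : c * y ∈ J := by
  simpa [fpow_one] using (hc.2 J y).mp hy 0

theorem IsTestElement.mul_pow_mem_fpow [ExpChar R p] {c : R} (hc : IsTestElement p c)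
    {I : Ideal R} {e : ℕ} {y : R} (hy : y ∈ tightClosure p (fpow I (p ^ e))) (f : ℕ) :
    c * y ^ p ^ f ∈ fpow I (p ^ (e + f)) :=
  fpow_fpow p I e f ▸ (hc.2 _ y).mp hy f

end TightClosure

theorem Ideal.mem_of_pow_mul_mem {R : Type*} [CommRing R] {J : Ideal R} {x : R}
    (hx : ∀ a : R, x * a ∈ J → a ∈ J) (n : ℕ) {a : R} (ha : x ^ n * a ∈ J) : a ∈ J := by
  induction n generalizing a with
  | zero => simpa using ha
  | succ n ih => exact hx a (ih (by rwa [← mul_assoc, ← pow_succ]))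

theorem stmt4_general {R : Type*} [CommRing R]
    (p : ℕ) (hp : p.Prime) [CharP R p] (c : R) (hc : IsTestElement p c)
    (I : Ideal R) (x : R)
    (h : ∀ e : ℕ, ∃ Iq : Ideal R,
      fpow I (p ^ e) ≤ Iq ∧ Iq ≤ tightClosure p (fpow I (p ^ e)) ∧
        ∀ a : R, x * a ∈ Iq → a ∈ Iq) :
    ∀ e : ℕ, ∀ a : R,
      x * a ∈ tightClosure p (fpow I (p ^ e)) → a ∈ tightClosure p (fpow I (p ^ e)) := by
  have : ExpChar R p := ExpChar.prime hp
  intro e a hxa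
  refine mem_tightClosure_of_forall_mul_pow_mem (hc.pow 2) fun f => ?_
  obtain ⟨Iq, hIq_ge, hIq_le, hx⟩ := h (e + f)
  have hxca : x ^ p ^ f * (c * a ^ p ^ f) ∈ Iq :=
    hIq_ge (by simpa only [mul_pow, mul_left_comm] using hc.mul_pow_mem_fpow hxa f)
  have hca : c * a ^ p ^ f ∈ tightClosure p (fpow I (p ^ (e + f))) :=
    hIq_le (Ideal.mem_of_pow_mul_mem hx _ hxca)
  rw [fpow_fpow, sq, mul_assoc]
  exact hc.mul_mem hca

/-- If for each `q = p^e` there is an ideal `I_q` with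
`I^{[q]} ⊆ I_q ⊆ (I^{[q]})*` and `x` a nonzerodivisor modulo `I_q`, then `x` is a
nonzerodivisor modulo `(I^{[q]})*` for every `q`. -/
theorem stmt4 {R : Type*} [CommRing R] [IsNoetherianRing R] [IsLocalRing R]
    (p : ℕ) (hp : p.Prime) [CharP R p] (c : R) (hc : IsTestElement p c)
    (I : Ideal R) (x : R)
    (h : ∀ e : ℕ, ∃ Iq : Ideal R,
      fpow I (p ^ e) ≤ Iq ∧ Iq ≤ tightClosure p (fpow I (p ^ e)) ∧
        ∀ a : R, x * a ∈ Iq → a ∈ Iq) :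
    ∀ e : ℕ, ∀ a : R,
      x * a ∈ tightClosure p (fpow I (p ^ e)) → a ∈ tightClosure p (fpow I (p ^ e)) :=
  stmt4_general p hp c hc I x h
end

section
/- Let (R, m) be a Noetherian local ring of characteristic p > 0 with an m-primary ideal I. Then e_HK(I) ≤ length(R/I) · e_HK(m). -/
open Filter IsLocalRing

/-! Since `m ^ k ≤ I`, every ideal `A ⊇ I` with `A ≠ R` has some `y ∉ A` with `m y ⊆ A`,
and passing from `A` to `A + (y)` lowers `length (R/A)` by at least one. In characteristic `p`,
`(A + (y))^[q] = A^[q] + (y^q)`, so `(A + (y))^[q] / A^[q]` is cyclic, generated by `y^q` and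
killed by `m^[q]`; hence it has length at most `length (R/m^[q])`. Induction gives
`length (R/I^[q]) ≤ length (R/I) · length (R/m^[q])` for every `q = p^e`, and the inequality
survives division by `p^(d e)` and the limit. -/

open Module

section Length

variable {R M : Type*} [CommRing R] [AddCommGroup M] [Module R M]

theorem Module.length_quotient_eq_add_of_le {A B : Submodule R M} (h : A ≤ B) :
    length R (M ⧸ A) = length R (B.map A.mkQ) + length R (M ⧸ B) := by
  rw [Module.length_eq_add_of_exact (B.map A.mkQ).subtype (B.map A.mkQ).mkQ
    (B.map A.mkQ).injective_subtype (B.map A.mkQ).mkQ_surjective (LinearMap.exact_subtype_mkQ _),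
    (Submodule.quotientQuotientEquivQuotient A B h).length_eq]

theorem Submodule.map_mkQ_sup_span_singleton (A : Submodule R M) (y : M) :
    (A ⊔ span R {y}).map A.mkQ = span R {A.mkQ y} := by
  rw [map_sup, mkQ_map_self, bot_sup_eq, map_span, Set.image_singleton]

theorem Module.length_span_singleton_le {x : M} {J : Ideal R} (h : J ≤ Ideal.torsionOf R M x) :
    length R (Submodule.span R {x}) ≤ length R (R ⧸ J) := by
  rw [← (Ideal.quotTorsionOfEquivSpanSingleton R M x).length_eq]
  exact length_le_of_surjective _ (Submodule.factor_surjective h)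

theorem Module.length_quotient_le_add_of_le_colon {A : Submodule R M} {y : M} {J : Ideal R}
    (hJ : J ≤ A.colon {y}) :
    length R (M ⧸ A) ≤ length R (R ⧸ J) + length R (M ⧸ (A ⊔ Submodule.span R {y})) := by
  rw [length_quotient_eq_add_of_le le_sup_left, Submodule.map_mkQ_sup_span_singleton]
  gcongr
  refine length_span_singleton_le fun r hr => ?_
  rw [Ideal.mem_torsionOf_iff, ← map_smul, Submodule.mkQ_apply, Submodule.Quotient.mk_eq_zero]
  exact Submodule.mem_colon_singleton.mp (hJ hr)

theorem Module.length_quotient_sup_span_singleton_lt {A : Submodule R M} {y : M} (hy : y ∉ A)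
    (hA : length R (M ⧸ A) ≠ ⊤) :
    length R (M ⧸ (A ⊔ Submodule.span R {y})) < length R (M ⧸ A) := by
  have hsplit := length_quotient_eq_add_of_le (le_sup_left : A ≤ A ⊔ Submodule.span R {y})
  rw [Submodule.map_mkQ_sup_span_singleton] at hsplit
  rw [hsplit] at hA ⊢
  have : Nontrivial (Submodule.span R {A.mkQ y}) := by
    simpa [Submodule.nontrivial_iff_ne_bot] using hy
  exact ENat.lt_add_left (WithTop.add_ne_top.mp hA).2
    (length_pos (R := R) (M := Submodule.span R {A.mkQ y}))

theorem qlen_eq_toNat_length (I : Ideal R) : qlen I = (length R (R ⧸ I)).toNat := by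
  rw [qlen, ← coe_length, WithBot.unbotD_coe]

end Length

section Frobenius

variable {R : Type*} [CommRing R]

theorem pow_mem_fpow {A : Ideal R} {x : R} (hx : x ∈ A) (q : ℕ) : x ^ q ∈ fpow A q :=
  Ideal.subset_span ⟨x, hx, rfl⟩

theorem fpow_mono {A B : Ideal R} (h : A ≤ B) (q : ℕ) : fpow A q ≤ fpow B q :=
  Ideal.span_mono (Set.image_mono h)

theorem fpow_top (q : ℕ) : fpow (⊤ : Ideal R) q = ⊤ :=
  (Ideal.eq_top_iff_one _).mpr (by simpa using pow_mem_fpow (Submodule.mem_top : (1 : R) ∈ ⊤) q)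

theorem fpow_le_self {q : ℕ} (hq : q ≠ 0) (A : Ideal R) : fpow A q ≤ A :=
  Ideal.span_le.mpr <| by
    rintro _ ⟨x, hx, rfl⟩
    exact A.pow_mem_of_mem hx q (Nat.pos_of_ne_zero hq)

theorem radical_fpow {q : ℕ} (hq : q ≠ 0) (A : Ideal R) : (fpow A q).radical = A.radical :=
  le_antisymm (Ideal.radical_mono (fpow_le_self hq A)) <|
    Ideal.radical_le_radical_iff.mpr fun _ hx => ⟨q, pow_mem_fpow hx q⟩

theorem fpow_le_colon {A J : Ideal R} {y : R} (h : J ≤ A.colon {y}) (q : ℕ) :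
    fpow J q ≤ (fpow A q).colon {y ^ q} :=
  Ideal.span_le.mpr <| by
    rintro _ ⟨z, hz, rfl⟩
    rw [SetLike.mem_coe, Submodule.mem_colon_singleton, smul_eq_mul, ← mul_pow]
    exact pow_mem_fpow (Submodule.mem_colon_singleton.mp (h hz)) q

theorem fpow_sup_span_singleton (p : ℕ) [ExpChar R p] (A : Ideal R) (y : R) (e : ℕ) :
    fpow (A ⊔ Ideal.span {y}) (p ^ e) = fpow A (p ^ e) ⊔ Ideal.span {y ^ p ^ e} := by
  refine le_antisymm (Ideal.span_le.mpr ?_) (sup_le (fpow_mono le_sup_left _) ?_)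
  · rintro _ ⟨x, hx, rfl⟩
    obtain ⟨a, ha, _, ht, rfl⟩ := Submodule.mem_sup.mp hx
    obtain ⟨r, rfl⟩ := Ideal.mem_span_singleton'.mp ht
    show (a + r * y) ^ p ^ e ∈ _
    rw [add_pow_expChar_pow, mul_pow]
    exact add_mem (Ideal.mem_sup_left (pow_mem_fpow ha _))
      (Ideal.mem_sup_right (Ideal.mul_mem_left _ _ (Ideal.mem_span_singleton_self _)))
  · rw [Ideal.span_le, Set.singleton_subset_iff]
    exact pow_mem_fpow (Ideal.mem_sup_right (Ideal.mem_span_singleton_self y)) _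

end Frobenius

section HilbertKunz

variable {R : Type*} [CommRing R]

theorem Ideal.exists_notMem_le_colon_of_pow_le {A J : Ideal R} {k : ℕ} (hk : J ^ k ≤ A)
    (hA : A ≠ ⊤) : ∃ y ∉ A, J ≤ A.colon {y} := by
  induction k with
  | zero => exact absurd (top_le_iff.mp (by simpa using hk)) hA
  | succ k ih =>
    by_cases hJk : J ^ k ≤ A
    · exact ih hJk
    obtain ⟨y, hyJ, hyA⟩ := SetLike.not_le_iff_exists.mp hJk
    refine ⟨y, hyA, fun z hz => Submodule.mem_colon_singleton.mpr (hk ?_)⟩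
    rw [pow_succ']
    exact Ideal.mul_mem_mul hz hyJ

theorem length_quotient_fpow_le_add (p : ℕ) [ExpChar R p] {A J : Ideal R} {y : R}
    (hJ : J ≤ A.colon {y}) (e : ℕ) :
    length R (R ⧸ fpow A (p ^ e)) ≤
      length R (R ⧸ fpow J (p ^ e)) + length R (R ⧸ fpow (A ⊔ Ideal.span {y}) (p ^ e)) := by
  rw [fpow_sup_span_singleton]
  exact length_quotient_le_add_of_le_colon (fpow_le_colon hJ _)

theorem length_quotient_fpow_le_mul (p : ℕ) [ExpChar R p] {A J : Ideal R} {k : ℕ}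
    (hk : J ^ k ≤ A) (e n : ℕ) (hn : length R (R ⧸ A) = n) :
    length R (R ⧸ fpow A (p ^ e)) ≤ n * length R (R ⧸ fpow J (p ^ e)) := by
  induction n using Nat.strong_induction_on generalizing A with
  | _ n ih =>
  by_cases hA : A = ⊤
  · simp [hA, fpow_top]
  obtain ⟨y, hyA, hy⟩ := Ideal.exists_notMem_le_colon_of_pow_le hk hA
  have hlt := length_quotient_sup_span_singleton_lt hyA (hn ▸ ENat.natCast_ne_top n)
  obtain ⟨m, hm⟩ := ENat.ne_top_iff_exists.mp hlt.ne_top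
  have hmn : m < n := by rw [← hm, hn] at hlt; exact_mod_cast hlt
  calc length R (R ⧸ fpow A (p ^ e))
      ≤ length R (R ⧸ fpow J (p ^ e)) + length R (R ⧸ fpow (A ⊔ Ideal.span {y}) (p ^ e)) :=
        length_quotient_fpow_le_add p hy e
    _ ≤ length R (R ⧸ fpow J (p ^ e)) + m * length R (R ⧸ fpow J (p ^ e)) :=
        add_le_add_right (ih m hmn (hk.trans le_sup_left) hm.symm) _
    _ = (m + 1 : ℕ) * length R (R ⧸ fpow J (p ^ e)) := by push_cast; ring
    _ ≤ n * length R (R ⧸ fpow J (p ^ e)) := by gcongr; exact_mod_cast hmn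

end HilbertKunz

section Local

variable {R : Type*} [CommRing R] [IsNoetherianRing R] [IsLocalRing R]

theorem length_quotient_ne_top_of_radical_eq {A : Ideal R} (hA : A.radical = maximalIdeal R) :
    length R (R ⧸ A) ≠ ⊤ := by
  have : IsArtinianRing (R ⧸ A) :=
    quotient_artinian_of_mem_minimalPrimes_of_isLocalRing A <| by
      rw [← Ideal.radical_minimalPrimes, hA, Ideal.minimalPrimes_eq_subsingleton_self]
      rfl
  rw [length_eq_of_surjective (R := R ⧸ A) (M := R ⧸ A) Ideal.Quotient.mk_surjective]
  exact length_ne_top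

theorem qlen_fpow_le_mul (p : ℕ) [ExpChar R p] {I : Ideal R}
    (hI : I.radical = maximalIdeal R) (e : ℕ) :
    qlen (fpow I (p ^ e)) ≤ qlen I * qlen (fpow (maximalIdeal R) (p ^ e)) := by
  obtain ⟨k, hk⟩ := Ideal.exists_pow_le_of_le_radical_of_fg hI.ge (IsNoetherian.noetherian _)
  have hI_fin := length_quotient_ne_top_of_radical_eq hI
  have hm_fin := length_quotient_ne_top_of_radical_eq <|
    (radical_fpow (expChar_pow_pos R p e).ne' _).trans (maximalIdeal.isMaximal R).isPrime.radical
  rw [qlen_eq_toNat_length, qlen_eq_toNat_length, qlen_eq_toNat_length]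
  refine ENat.toNat_le_of_le_natCast ?_
  rw [Nat.cast_mul, ENat.natCast_toNat hm_fin]
  exact length_quotient_fpow_le_mul p hk e _ (ENat.natCast_toNat hI_fin).symm

end Local

theorem stmt13_general {R : Type*} [CommRing R] [IsNoetherianRing R] [IsLocalRing R]
    (p : ℕ) (hp : p.Prime) [CharP R p]
    (d : ℕ)
    (I : Ideal R) (hI : I.radical = maximalIdeal R)
    (eI em : ℝ)
    (hIk : Filter.Tendsto (fun e : ℕ => (qlen (fpow I (p ^ e)) : ℝ) / (p : ℝ) ^ (d * e))
      Filter.atTop (nhds eI))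
    (hmk : Filter.Tendsto
      (fun e : ℕ => (qlen (fpow (maximalIdeal R) (p ^ e)) : ℝ) / (p : ℝ) ^ (d * e))
      Filter.atTop (nhds em)) :
    eI ≤ (qlen I : ℝ) * em := by
  have : ExpChar R p := ExpChar.prime hp
  refine le_of_tendsto_of_tendsto' hIk (hmk.const_mul (qlen I : ℝ)) fun e => ?_
  rw [← mul_div_assoc]
  gcongr
  exact_mod_cast qlen_fpow_le_mul p hI e

/-- The Watanabe–Yoshida inequality `e_HK(I) ≤ length(R/I) · e_HK(m)`. -/
theorem stmt13 {R : Type*} [CommRing R] [IsNoetherianRing R] [IsLocalRing R]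
    (p : ℕ) (hp : p.Prime) [CharP R p]
    (d : ℕ) (hd : ringKrullDim R = d)
    (I : Ideal R) (hI : I.radical = maximalIdeal R)
    (eI em : ℝ)
    (hIk : Filter.Tendsto (fun e : ℕ => (qlen (fpow I (p ^ e)) : ℝ) / (p : ℝ) ^ (d * e))
      Filter.atTop (nhds eI))
    (hmk : Filter.Tendsto
      (fun e : ℕ => (qlen (fpow (maximalIdeal R) (p ^ e)) : ℝ) / (p : ℝ) ^ (d * e))
      Filter.atTop (nhds em)) :
    eI ≤ (qlen I : ℝ) * em :=
  stmt13_general p hp d I hI eI em hIk hmk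
end
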